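/- arXiv:1008.3216 — 2 statements merged into one kernel-verified Lean document; each statement's English description precedes it below -/
import Mathlib

section
/- Let G be a finite simple graph, M a maximum matching of G, and k the number of bad vertices of G with respect to M. Then the number of edges uv ∈ M for which some bad vertex is adjacent to both u and v is at least k; equivalently, there are at least k bad triangles with pairwise distinct matching edges. -/
open SimpleGraph

/-- A total cover of a simple graph `G`: a pair of a vertex set `SV` and an edge set
`SE ⊆ E(G)` such that every vertex not in `SV` is adjacent to a vertex of `SV` or is an
endpoint of an edge of `SE`, and every edge not in `SE` has an endpoint in `SV` or shares
an endpoint with an edge of `SE`. -/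
def IsTotalCover {V : Type*} (G : SimpleGraph V) (SV : Set V) (SE : Set (Sym2 V)) : Prop :=
  SE ⊆ G.edgeSet ∧
  (∀ v : V, v ∉ SV → (∃ u ∈ SV, G.Adj v u) ∨ (∃ e ∈ SE, v ∈ e)) ∧
  (∀ e ∈ G.edgeSet, e ∉ SE → (∃ v ∈ SV, v ∈ e) ∨ (∃ f ∈ SE, ∃ v : V, v ∈ e ∧ v ∈ f))

/-- A matching of `G`: a set of edges of `G` that are pairwise vertex-disjoint. -/
def IsMatchingSet {V : Type*} (G : SimpleGraph V) (M : Set (Sym2 V)) : Prop :=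
  M ⊆ G.edgeSet ∧ ∀ e ∈ M, ∀ f ∈ M, e ≠ f → ∀ v : V, v ∈ e → v ∉ f

/-- A maximum matching of `G`: a matching of largest cardinality. -/
def IsMaximumMatching {V : Type*} (G : SimpleGraph V) (M : Set (Sym2 V)) : Prop :=
  IsMatchingSet G M ∧ ∀ M' : Set (Sym2 V), IsMatchingSet G M' → M'.ncard ≤ M.ncard

/-- A vertex is covered by a matching `M` if it is an endpoint of some edge of `M`. -/
def CoveredBy {V : Type*} (M : Set (Sym2 V)) (v : V) : Prop :=
  ∃ e ∈ M, v ∈ e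

/-- A bad vertex with respect to a matching `M`: a vertex not covered by `M` which is
adjacent to both endpoints of some edge of `M`. -/
def IsBad {V : Type*} (G : SimpleGraph V) (M : Set (Sym2 V)) (w : V) : Prop :=
  ¬ CoveredBy M w ∧ ∃ u v : V, s(u, v) ∈ M ∧ G.Adj w u ∧ G.Adj w v

/-- An isolated vertex: a vertex of degree 0, i.e. adjacent to no vertex. -/
def IsIsolated {V : Type*} (G : SimpleGraph V) (v : V) : Prop :=
  ∀ u : V, ¬ G.Adj v u

/-- The total graph `T(G)` of `G`: its vertices are the vertices and edges of `G`, with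
adjacency given by adjacency/incidence in `G`. -/
def totalGraph {V : Type*} (G : SimpleGraph V) : SimpleGraph (V ⊕ G.edgeSet) where
  Adj x y :=
    match x, y with
    | .inl a, .inl b => G.Adj a b
    | .inl a, .inr e => a ∈ e.1
    | .inr e, .inl a => a ∈ e.1
    | .inr e, .inr f => e ≠ f ∧ ∃ v : V, v ∈ e.1 ∧ v ∈ f.1
  symm := by
    constructor
    rintro (a | e) (b | f) h
    · exact G.adj_symm h
    · exact h
    · exact h
    · exact ⟨h.1.symm, by obtain ⟨v, h1, h2⟩ := h.2; exact ⟨v, h2, h1⟩⟩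
  loopless := by
    constructor
    rintro (a | e) h
    · exact G.loopless.irrefl a h
    · exact h.1 rfl

/-!
Send each bad vertex `w` to a matching edge `uv` with `w ~ u` and `w ~ v`. This map is
injective: if two distinct unmatched vertices `w₁, w₂` were both adjacent to `u` and `v`,
then `w₁ u v w₂` would be an `M`-augmenting path, and replacing `uv` by `w₁u` and `vw₂`
would give a matching larger than the maximum one.
-/

section

variable {V : Type*} {G : SimpleGraph V} {M : Set (Sym2 V)} {e : Sym2 V} {x : V}

lemma coveredBy_insert : CoveredBy (insert e M) x ↔ x ∈ e ∨ CoveredBy M x := by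
  simp [CoveredBy]

lemma CoveredBy.mono {N : Set (Sym2 V)} (h : CoveredBy M x) (hMN : M ⊆ N) : CoveredBy N x :=
  let ⟨f, hf, hxf⟩ := h
  ⟨f, hMN hf, hxf⟩

lemma notMem_of_not_coveredBy (hx : x ∈ e) (h : ¬ CoveredBy M x) : e ∉ M :=
  fun he => h ⟨e, he, hx⟩

namespace IsMatchingSet

lemma sdiff_singleton (hM : IsMatchingSet G M) (e : Sym2 V) : IsMatchingSet G (M \ {e}) :=
  ⟨Set.sdiff_subset.trans hM.1, fun f hf g hg => hM.2 f hf.1 g hg.1⟩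

lemma not_coveredBy_sdiff_singleton (hM : IsMatchingSet G M) (he : e ∈ M) (hx : x ∈ e) :
    ¬ CoveredBy (M \ {e}) x := by
  rintro ⟨f, ⟨hfM, hfe⟩, hxf⟩
  exact hM.2 f hfM e he hfe x hxf hx

lemma insert (hM : IsMatchingSet G M) (he : e ∈ G.edgeSet)
    (hcov : ∀ x ∈ e, ¬ CoveredBy M x) : IsMatchingSet G (insert e M) := by
  refine ⟨Set.insert_subset he hM.1, ?_⟩
  rintro f (rfl | hf) g (rfl | hg) hfg x hxf hxg
  · exact hfg rfl
  · exact hcov x hxf ⟨g, hg, hxg⟩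
  · exact hcov x hxg ⟨f, hf, hxf⟩
  · exact hM.2 f hf g hg hfg x hxf hxg

lemma exists_ncard_lt_of_augmentingPath {u v w₁ w₂ : V} (hM : IsMatchingSet G M)
    (hfin : M.Finite) (he : s(u, v) ∈ M) (hw₁ : ¬ CoveredBy M w₁) (hw₂ : ¬ CoveredBy M w₂)
    (hne : w₁ ≠ w₂) (h₁ : G.Adj w₁ u) (h₂ : G.Adj w₂ v) :
    ∃ M', IsMatchingSet G M' ∧ M.ncard < M'.ncard := by
  have huv : u ≠ v := (hM.1 he).ne
  have hw₁uv : w₁ ≠ u ∧ w₁ ≠ v := by simpa using fun h => hw₁ ⟨_, he, h⟩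
  have hw₂u : w₂ ≠ u := fun h => hw₂ ⟨_, he, by simp [h]⟩
  have hw₂' : ¬ CoveredBy (M \ {s(u, v)}) w₂ := fun h => hw₂ (h.mono Set.sdiff_subset)
  set N := Insert.insert s(v, w₂) (M \ {s(u, v)})
  have hN : IsMatchingSet G N := by
    refine (hM.sdiff_singleton _).insert h₂.symm fun x hx => ?_
    rcases Sym2.mem_iff.1 hx with rfl | rfl
    · exact hM.not_coveredBy_sdiff_singleton he (by simp)
    · exact hw₂'
  have hcovN : ∀ x ∈ s(w₁, u), ¬ CoveredBy N x := by
    intro x hx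
    rw [coveredBy_insert, not_or]
    rcases Sym2.mem_iff.1 hx with rfl | rfl
    · exact ⟨by simp [hw₁uv.2, hne], fun h => hw₁ (h.mono Set.sdiff_subset)⟩
    · exact ⟨by simp [huv, hw₂u.symm], hM.not_coveredBy_sdiff_singleton he (by simp)⟩
  refine ⟨Insert.insert s(w₁, u) N, hN.insert h₁ hcovN, ?_⟩
  have hfin' : (M \ {s(u, v)}).Finite := hfin.sdiff
  rw [Set.ncard_insert_of_notMem (notMem_of_not_coveredBy (by simp) (hcovN w₁ (by simp)))
      (hfin'.insert _), Set.ncard_insert_of_notMem (notMem_of_not_coveredBy (by simp) hw₂') hfin',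
    ← Set.ncard_sdiff_singleton_add_one he hfin]
  omega

end IsMatchingSet

namespace IsMaximumMatching

lemma finite (hM : IsMaximumMatching G M) : M.Finite := by
  by_contra hinf
  obtain ⟨e, he⟩ := Set.Infinite.nonempty hinf
  have hsingle : IsMatchingSet G {e} :=
    ⟨Set.singleton_subset_iff.2 (hM.1.1 he), fun f hf g hg hfg => (hfg (hf.trans hg.symm)).elim⟩
  have := hM.2 {e} hsingle
  rw [Set.ncard_singleton, Set.Infinite.ncard hinf] at this
  omega

lemma eq_of_adj_of_not_coveredBy {u v w₁ w₂ : V} (hM : IsMaximumMatching G M)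
    (he : s(u, v) ∈ M) (hw₁ : ¬ CoveredBy M w₁) (hw₂ : ¬ CoveredBy M w₂)
    (h₁ : G.Adj w₁ u) (h₂ : G.Adj w₂ v) : w₁ = w₂ := by
  by_contra hne
  obtain ⟨M', hM', hlt⟩ := hM.1.exists_ncard_lt_of_augmentingPath hM.finite he hw₁ hw₂ hne h₁ h₂
  exact (hM.2 M' hM').not_gt hlt

end IsMaximumMatching

end

theorem stmt_8_general {V : Type*} (G : SimpleGraph V)
    (M : Set (Sym2 V)) (hM : IsMaximumMatching G M)
    (k : ℕ) (hk : {w : V | IsBad G M w}.ncard = k) :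
    k ≤ {e ∈ M | ∃ w u v : V, IsBad G M w ∧ e = s(u, v) ∧
          G.Adj w u ∧ G.Adj w v}.ncard := by
  subst hk
  set S := {e ∈ M | ∃ w u v : V, IsBad G M w ∧ e = s(u, v) ∧ G.Adj w u ∧ G.Adj w v}
  have hbad : ∀ w, ∃ e, IsBad G M w → e ∈ S ∧ ∃ u v, e = s(u, v) ∧ G.Adj w u ∧ G.Adj w v := by
    intro w
    by_cases hw : IsBad G M w
    · obtain ⟨u, v, he, hu, hv⟩ := hw.2
      exact ⟨s(u, v), fun _ => ⟨⟨he, w, u, v, hw, rfl, hu, hv⟩, u, v, rfl, hu, hv⟩⟩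
    · exact ⟨s(w, w), fun h => (hw h).elim⟩
  choose f hf using hbad
  have hfS : ∀ w ∈ {w | IsBad G M w}, f w ∈ S := fun w hw => (hf w hw).1
  refine Set.ncard_le_ncard_of_injOn f hfS ?_ (hM.finite.subset fun e he => he.1)
  intro w₁ hw₁ w₂ hw₂ heq
  obtain ⟨⟨hfM, -⟩, u, v, huv, hu₁, -⟩ := hf w₁ hw₁
  obtain ⟨-, u', v', huv', hu₂, hv₂⟩ := hf w₂ hw₂
  have hv : G.Adj w₂ v := by
    have : s(u, v) = s(u', v') := huv.symm.trans (heq.trans huv')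
    rcases Sym2.eq_iff.1 this with ⟨rfl, rfl⟩ | ⟨rfl, rfl⟩ <;> assumption
  exact hM.eq_of_adj_of_not_coveredBy (huv ▸ hfM) hw₁.1 hw₂.1 hu₁ hv

/-- the number of matching edges of a maximum matching `M` whose two
endpoints are both adjacent to some bad vertex is at least the number `k` of bad
vertices. -/
theorem stmt_8 {V : Type*} [Fintype V] (G : SimpleGraph V)
    (M : Set (Sym2 V)) (hM : IsMaximumMatching G M)
    (k : ℕ) (hk : {w : V | IsBad G M w}.ncard = k) :
    k ≤ {e ∈ M | ∃ w u v : V, IsBad G M w ∧ e = s(u, v) ∧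
          G.Adj w u ∧ G.Adj w v}.ncard :=
  stmt_8_general G M hM k hk
end

section
/- For every even natural number n ≥ 2, let H_n be the simple graph with vertex set {v} ∪ {u₁, …, u_n} ∪ {v₁, …, v_n} and edge set consisting of the edges u_i v_i for 1 ≤ i ≤ n, the edges v v_i for 1 ≤ i ≤ n, and the edges u_{2j−1} u_{2j} for 1 ≤ j ≤ n/2. Then the pair (S_V, S_E) with S_V = {v} and S_E = {u_{2j−1} u_{2j} : 1 ≤ j ≤ n/2} is a total cover of H_n of size n/2 + 1. -/
open SimpleGraph

/-- The hub vertex `v` of the graph `Hₙ`. -/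
def hub (n : ℕ) : Unit ⊕ Fin n ⊕ Fin n := Sum.inl ()

/-- The vertex `uᵢ` of the graph `Hₙ` (0-indexed: `uu n i` is `u_{i+1}`). -/
def uu (n : ℕ) (i : Fin n) : Unit ⊕ Fin n ⊕ Fin n := Sum.inr (Sum.inl i)

/-- The vertex `vᵢ` of the graph `Hₙ` (0-indexed: `vv n i` is `v_{i+1}`). -/
def vv (n : ℕ) (i : Fin n) : Unit ⊕ Fin n ⊕ Fin n := Sum.inr (Sum.inr i)

/-- The graph `Hₙ` on the vertex set `{v} ∪ {u₁, …, uₙ} ∪ {v₁, …, vₙ}`, with edges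
`uᵢvᵢ` (`1 ≤ i ≤ n`), `v vᵢ` (`1 ≤ i ≤ n`), and `u_{2j-1} u_{2j}` (`1 ≤ j ≤ n/2`);
in the 0-indexed encoding the last family consists of the edges `uu n i -- uu n (i+1)`
for even `i` with `i + 1 < n`. -/
def Hgraph (n : ℕ) : SimpleGraph (Unit ⊕ Fin n ⊕ Fin n) :=
  SimpleGraph.fromEdgeSet
    ({e : Sym2 (Unit ⊕ Fin n ⊕ Fin n) | ∃ i : Fin n, e = s(uu n i, vv n i)} ∪
     {e : Sym2 (Unit ⊕ Fin n ⊕ Fin n) | ∃ i : Fin n, e = s(hub n, vv n i)} ∪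
     {e : Sym2 (Unit ⊕ Fin n ⊕ Fin n) | ∃ i : Fin n, i.val % 2 = 0 ∧
        ∃ h : i.val + 1 < n, e = s(uu n i, uu n ⟨i.val + 1, h⟩)})

/-! The hub `v` dominates every `vᵢ`, and since `n` is even the edges
`u_{2j-1}u_{2j}` form a perfect matching of the `uᵢ`; so every `uᵢ` and every edge `uᵢvᵢ`
meets a matching edge, while every edge `v vᵢ` contains `v`. The `n/2` matching edges are
distinct because they have distinct endpoints. -/

def pairEdges (n : ℕ) : Set (Sym2 (Unit ⊕ Fin n ⊕ Fin n)) :=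
  {e | ∃ i : Fin n, i.val % 2 = 0 ∧ ∃ h : i.val + 1 < n, e = s(uu n i, uu n ⟨i.val + 1, h⟩)}

lemma uu_injective (n : ℕ) : Function.Injective (uu n) := fun _ _ h => by
  simpa [uu] using h

lemma hub_adj_vv (n : ℕ) (i : Fin n) : (Hgraph n).Adj (hub n) (vv n i) := by
  rw [Hgraph, fromEdgeSet_adj]
  exact ⟨Or.inl (Or.inr ⟨i, rfl⟩), by simp [hub, vv]⟩

lemma pairEdges_subset_edgeSet (n : ℕ) : pairEdges n ⊆ (Hgraph n).edgeSet := by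
  rintro e ⟨i, hi, hlt, rfl⟩
  rw [Hgraph, edgeSet_fromEdgeSet]
  refine ⟨Or.inr ⟨i, hi, hlt, rfl⟩, ?_⟩
  simp only [Sym2.diagSet, Set.mem_ofPred_eq, Sym2.mk_isDiag_iff, (uu_injective n).eq_iff,
    Fin.ext_iff]
  omega

/-- `uᵢ` lies on the matching edge with smaller endpoint `u_{2⌊i/2⌋}`. -/
lemma exists_pairEdges_mem {n : ℕ} (heven : Even n) (i : Fin n) :
    ∃ e ∈ pairEdges n, uu n i ∈ e := by
  obtain ⟨k, rfl⟩ := heven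
  have hlt : 2 * (i.val / 2) + 1 < k + k := by omega
  refine ⟨_, ⟨⟨2 * (i.val / 2), by omega⟩, Nat.mul_mod_right _ _, hlt, rfl⟩, ?_⟩
  simp only [Sym2.mem_iff, (uu_injective _).eq_iff, Fin.ext_iff]
  omega

lemma ncard_pairEdges (n : ℕ) : (pairEdges n).ncard = n / 2 := by
  let pair : Fin (n / 2) → Sym2 (Unit ⊕ Fin n ⊕ Fin n) := fun j =>
    s(uu n ⟨2 * j.val, by omega⟩, uu n ⟨2 * j.val + 1, by omega⟩)
  have hrange : pairEdges n = Set.range pair := by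
    ext e
    constructor
    · rintro ⟨i, hi, hlt, rfl⟩
      refine ⟨⟨i.val / 2, by omega⟩, ?_⟩
      simp only [pair]
      congr 3 <;> omega
    · rintro ⟨j, rfl⟩
      exact ⟨⟨2 * j.val, by omega⟩, Nat.mul_mod_right _ _, (by omega : 2 * j.val + 1 < n), rfl⟩
  have hinj : Function.Injective pair := by
    intro a b hab
    simp only [pair, Sym2.eq_iff, (uu_injective n).eq_iff, Fin.ext_iff] at hab
    exact Fin.ext (by omega)
  rw [hrange, ← Set.image_univ, Set.ncard_image_of_injective _ hinj, Set.ncard_univ,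
    Nat.card_eq_fintype_card, Fintype.card_fin]

theorem stmt_13_general (n : ℕ) (heven : Even n) :
    IsTotalCover (Hgraph n) {hub n}
      {e : Sym2 (Unit ⊕ Fin n ⊕ Fin n) | ∃ i : Fin n, i.val % 2 = 0 ∧
        ∃ h : i.val + 1 < n, e = s(uu n i, uu n ⟨i.val + 1, h⟩)} ∧
    ({hub n} : Set (Unit ⊕ Fin n ⊕ Fin n)).ncard +
      {e : Sym2 (Unit ⊕ Fin n ⊕ Fin n) | ∃ i : Fin n, i.val % 2 = 0 ∧
        ∃ h : i.val + 1 < n, e = s(uu n i, uu n ⟨i.val + 1, h⟩)}.ncard = n / 2 + 1 := by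
  change IsTotalCover (Hgraph n) {hub n} (pairEdges n) ∧
    ({hub n} : Set _).ncard + (pairEdges n).ncard = n / 2 + 1
  refine ⟨⟨pairEdges_subset_edgeSet n, ?_, ?_⟩,
    by rw [Set.ncard_singleton, ncard_pairEdges, add_comm]⟩
  · rintro (⟨⟩ | i | i) hv
    · exact absurd rfl hv
    · exact Or.inr (exists_pairEdges_mem heven i)
    · exact Or.inl ⟨hub n, rfl, (hub_adj_vv n i).symm⟩
  · intro e he hne
    rw [Hgraph, edgeSet_fromEdgeSet] at he
    rcases he.1 with (⟨i, rfl⟩ | ⟨i, rfl⟩) | hpair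
    · obtain ⟨f, hf, hi⟩ := exists_pairEdges_mem heven i
      exact Or.inr ⟨f, hf, uu n i, Sym2.mem_mk_left _ _, hi⟩
    · exact Or.inl ⟨hub n, rfl, Sym2.mem_mk_left _ _⟩
    · exact absurd hpair hne

/-- for even `n ≥ 2`, the pair consisting of the hub vertex `v` and the
edges `u_{2j-1}u_{2j}` (`1 ≤ j ≤ n/2`) is a total cover of `Hₙ` of size `n/2 + 1`. -/
theorem stmt_13 (n : ℕ) (hn : 2 ≤ n) (heven : Even n) :
    IsTotalCover (Hgraph n) {hub n}
      {e : Sym2 (Unit ⊕ Fin n ⊕ Fin n) | ∃ i : Fin n, i.val % 2 = 0 ∧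
        ∃ h : i.val + 1 < n, e = s(uu n i, uu n ⟨i.val + 1, h⟩)} ∧
    ({hub n} : Set (Unit ⊕ Fin n ⊕ Fin n)).ncard +
      {e : Sym2 (Unit ⊕ Fin n ⊕ Fin n) | ∃ i : Fin n, i.val % 2 = 0 ∧
        ∃ h : i.val + 1 < n, e = s(uu n i, uu n ⟨i.val + 1, h⟩)}.ncard = n / 2 + 1 :=
  stmt_13_general n heven
end
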